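/- (Last atomic label) Let T be an initialised labelled λ_c-term and suppose T →_lcf* T'. Let N be an application, abstraction or variable subterm of T' whose external label, read as a sequence of atomic symbols, is l₁⋯lₙ with n ≥ 1. Then the atomic label lₙ is the label assigned at initialisation to an application (respectively abstraction, respectively variable) subterm of T if and only if N is an application (respectively abstraction, respectively variable) term. -/
import Mathlib


/-- Exponential markers E ∈ {D, !, ?, R, S, W}. -/
inductive Marker : Type
  | D | bang | quest | R | S | W
deriving DecidableEq, Repr

/-- Labels: α, β ::= a | α·β | overline α | underline α | →E | ←E. -/
inductive Lab : Type
  | atom : ℕ → Lab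
  | comp : Lab → Lab → Lab
  | over : Lab → Lab
  | under : Lab → Lab
  | fwd : Marker → Lab
  | bwd : Marker → Lab
deriving DecidableEq, Repr

/-- Label reversal (·)^r. -/
def Lab.rev : Lab → Lab
  | .atom a => .atom a
  | .comp α β => .comp β.rev α.rev
  | .over α => .over α.rev
  | .under α => .under α.rev
  | .fwd E => .bwd E
  | .bwd E => .fwd E

/-- Labelled λ_c-terms: variables, abstractions and applications carry a label;
δ-, ε- and substitution terms carry no label.  `sub M N x` is M[N/x],
`dup x y z M` is δ_x^{y,z}.M and `eps x M` is ε_x.M. -/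
inductive Term : Type
  | var : ℕ → Lab → Term
  | lam : ℕ → Term → Lab → Term
  | app : Term → Term → Lab → Term
  | eps : ℕ → Term → Term
  | dup : ℕ → ℕ → ℕ → Term → Term
  | sub : Term → Term → ℕ → Term
deriving DecidableEq, Repr

/-- Free variables. -/
def FV : Term → Finset ℕ
  | .var x _ => {x}
  | .lam x M _ => FV M \ {x}
  | .app M N _ => FV M ∪ FV N
  | .eps x M => FV M ∪ {x}
  | .dup x y z M => (FV M \ {y, z}) ∪ {x}
  | .sub M N x => (FV M \ {x}) ∪ FV N

/-- The linearity (variable) constraints on λ_c-terms. -/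
def Wf : Term → Prop
  | .var _ _ => True
  | .lam x M _ => x ∈ FV M ∧ Wf M
  | .app M N _ => FV M ∩ FV N = ∅ ∧ Wf M ∧ Wf N
  | .eps x M => x ∉ FV M ∧ Wf M
  | .dup x y z M => x ∉ FV M ∧ y ≠ z ∧ y ∈ FV M ∧ z ∈ FV M ∧ Wf M
  | .sub M N x => x ∈ FV M ∧ (FV M \ {x}) ∩ FV N = ∅ ∧ Wf M ∧ Wf N

/-- The prefixing operation β • T. -/
def pre (β : Lab) : Term → Term
  | .var x α => .var x (.comp β α)
  | .lam x M α => .lam x M (.comp β α)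
  | .app M N α => .app M N (.comp β α)
  | .eps x M => .eps x (pre β M)
  | .dup x y z M => .dup x y z (pre β M)
  | .sub M N x => .sub (pre β M) N x

/-- The substitution (σ) rules of λ_lcf, applied at the root. -/
inductive SigmaLcf : Term → Term → Prop
  | lam {y M α N x} : FV N = ∅ →
      SigmaLcf (.sub (.lam y M α) N x) (.lam y (.sub M (pre (.fwd .quest) N) x) α)
  | app1 {M N α P x} : x ∈ FV M →
      SigmaLcf (.sub (.app M N α) P x) (.app (.sub M P x) N α)
  | app2 {M N α P x} : x ∈ FV N →
      SigmaLcf (.sub (.app M N α) P x) (.app M (.sub N P x) α)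
  | cpy1 {x y z M N} : FV N = ∅ →
      SigmaLcf (.sub (.dup x y z M) N x)
        (.sub (.sub M (pre (.fwd .R) N) y) (pre (.fwd .S) N) z)
  | cpy2 {x y z M N x'} : x' ≠ x →
      SigmaLcf (.sub (.dup x y z M) N x') (.dup x y z (.sub M N x'))
  | ers1 {x M N} : FV N = ∅ →
      SigmaLcf (.sub (.eps x M) N x) M
  | ers2 {x M N x'} : x' ≠ x →
      SigmaLcf (.sub (.eps x M) N x') (.eps x (.sub M N x'))
  | var {x α N} :
      SigmaLcf (.sub (.var x α) N x) (pre α N)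
  | cmp {M P y N x} : x ∈ FV P →
      SigmaLcf (.sub (.sub M P y) N x) (.sub M (.sub P N x) y)

/-- The label →D·α·←! used in the Beta rule of λ_lcf. -/
def dPhi (α : Lab) : Lab := .comp (.fwd .D) (.comp α (.bwd .bang))

/-- The Beta rule of λ_lcf, applied at the root:
((λx.M)^α N)^β → β·overline(→D·α·←!) • M[underline((→D·α·←!)^r) • N / x],
provided the function part is closed. -/
inductive BetaLcf : Term → Term → Prop
  | beta {x M α N β} : FV (Term.lam x M α) = ∅ →
      BetaLcf (.app (.lam x M α) N β)
        (pre (.comp β (.over (dPhi α)))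
          (.sub M (pre (.under (Lab.rev (dPhi α))) N) x))

/-- Closure of a root relation under arbitrary contexts. -/
inductive Ctx (r : Term → Term → Prop) : Term → Term → Prop
  | base {M N} : r M N → Ctx r M N
  | lam {x M M' α} : Ctx r M M' → Ctx r (.lam x M α) (.lam x M' α)
  | appL {M M' N α} : Ctx r M M' → Ctx r (.app M N α) (.app M' N α)
  | appR {M N N' α} : Ctx r N N' → Ctx r (.app M N α) (.app M N' α)
  | eps {x M M'} : Ctx r M M' → Ctx r (.eps x M) (.eps x M')
  | dup {x y z M M'} : Ctx r M M' → Ctx r (.dup x y z M) (.dup x y z M')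
  | subL {M M' N x} : Ctx r M M' → Ctx r (.sub M N x) (.sub M' N x)
  | subR {M N N' x} : Ctx r N N' → Ctx r (.sub M N x) (.sub M N' x)

/-- One-step σ-reduction of λ_lcf (context closure of the σ-rules). -/
def SigmaStep : Term → Term → Prop := Ctx SigmaLcf

/-- One-step Beta-reduction of λ_lcf (context closure of the Beta rule). -/
def BetaStep : Term → Term → Prop := Ctx BetaLcf

/-- One-step reduction →_lcf. -/
def LcfStep : Term → Term → Prop := Ctx (fun M N => BetaLcf M N ∨ SigmaLcf M N)

/-- The subterm relation. -/
inductive Subterm : Term → Term → Prop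
  | refl (t) : Subterm t t
  | lam {s M x α} : Subterm s M → Subterm s (.lam x M α)
  | appL {s M N α} : Subterm s M → Subterm s (.app M N α)
  | appR {s M N α} : Subterm s N → Subterm s (.app M N α)
  | eps {s x M} : Subterm s M → Subterm s (.eps x M)
  | dup {s x y z M} : Subterm s M → Subterm s (.dup x y z M)
  | subL {s M N x} : Subterm s M → Subterm s (.sub M N x)
  | subR {s M N x} : Subterm s N → Subterm s (.sub M N x)

/-- The external label of a term. -/
def elabel : Term → Lab
  | .var _ α => α
  | .lam _ _ α => α
  | .app _ _ α => α
  | .eps _ M => elabel M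
  | .dup _ _ _ M => elabel M
  | .sub M _ _ => elabel M

/-- The list of labels carried by the variable, abstraction and application
subterms of a term. -/
def labelsOf : Term → List Lab
  | .var _ α => [α]
  | .lam _ M α => α :: labelsOf M
  | .app M N α => α :: (labelsOf M ++ labelsOf N)
  | .eps _ M => labelsOf M
  | .dup _ _ _ M => labelsOf M
  | .sub M N _ => labelsOf M ++ labelsOf N

/-- A term is initialised when every variable, abstraction and application
subterm carries a single atomic label, these atomic labels are pairwise
distinct (hence no exponential markers occur). -/
def Initialised (T : Term) : Prop :=
  (∀ l ∈ labelsOf T, ∃ a, l = Lab.atom a) ∧ (labelsOf T).Nodup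

/-- A label read as the sequence of its atomic symbols (atomic labels and
exponential markers), ignoring the over/underline bracketing structure. -/
def Lab.atoms : Lab → List Lab
  | .atom a => [.atom a]
  | .comp α β => α.atoms ++ β.atoms
  | .over α => α.atoms
  | .under α => α.atoms
  | .fwd E => [.fwd E]
  | .bwd E => [.bwd E]

/-- A label read as the list of its top-level concatenation factors. -/
def Lab.factors : Lab → List Lab
  | .comp α β => α.factors ++ β.factors
  | .atom a => [.atom a]
  | .over α => [.over α]
  | .under α => [.under α]
  | .fwd E => [.fwd E]
  | .bwd E => [.bwd E]

/-- `IsApp N` holds when `N` is an application term. -/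
def IsApp (N : Term) : Prop := ∃ M₁ M₂ α, N = Term.app M₁ M₂ α

/-- `IsLam N` holds when `N` is an abstraction term. -/
def IsLam (N : Term) : Prop := ∃ x M α, N = Term.lam x M α

/-- `IsVar N` holds when `N` is a variable term. -/
def IsVar (N : Term) : Prop := ∃ x α, N = Term.var x α

/-! ### Auxiliary development -/

lemma atoms_ne_nil (α : Lab) : α.atoms ≠ [] := by
  induction α <;> simp_all [Lab.atoms]

lemma getLast?_comp (β α : Lab) :
    (Lab.comp β α).atoms.getLast? = α.atoms.getLast? := by
  show (β.atoms ++ α.atoms).getLast? = _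
  exact List.getLast?_append_of_ne_nil _ (atoms_ne_nil α)

/-- Head label of a term (for variables/abstractions/applications). -/
def headL : Term → Option Lab
  | .var _ α => some α
  | .lam _ _ α => some α
  | .app _ _ α => some α
  | _ => none

/-- Rough classification of the head constructor. -/
def kindOf : Term → ℕ
  | .var _ _ => 0
  | .lam _ _ _ => 1
  | .app _ _ _ => 2
  | _ => 3

lemma headL_mem {s : Term} {l : Lab} (h : headL s = some l) : l ∈ labelsOf s := by
  cases s <;> simp_all [headL, labelsOf]

lemma labelsOf_sublist {s T : Term} (h : Subterm s T) :
    (labelsOf s).Sublist (labelsOf T) := by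
  induction h with
  | refl => exact List.Sublist.refl _
  | lam _ ih => exact ih.trans (List.sublist_cons_self _ _)
  | appL _ ih =>
      exact ih.trans ((List.sublist_append_left _ _).trans (List.sublist_cons_self _ _))
  | appR _ ih =>
      exact ih.trans ((List.sublist_append_right _ _).trans (List.sublist_cons_self _ _))
  | eps _ ih => exact ih
  | dup _ ih => exact ih
  | subL _ ih => exact ih.trans (List.sublist_append_left _ _)
  | subR _ ih => exact ih.trans (List.sublist_append_right _ _)

lemma head_mem_of_sub {s T : Term} {l : Lab} (hs : Subterm s T) (h : headL s = some l) :
    l ∈ labelsOf T := (labelsOf_sublist hs).mem (headL_mem h)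

/-- In a term with pairwise distinct labels, two labelled subterms carrying the
same label have the same head constructor. -/
lemma kind_unique {l : Lab} : ∀ T : Term, (labelsOf T).Nodup →
    ∀ {s₁ s₂ : Term}, Subterm s₁ T → Subterm s₂ T →
    headL s₁ = some l → headL s₂ = some l → kindOf s₁ = kindOf s₂ := by
  intro T
  induction T with
  | var x α =>
      intro _ s₁ s₂ h₁ h₂ _ _
      cases h₁; cases h₂; rfl
  | lam x M α ih =>
      intro hnd s₁ s₂ h₁ h₂ e₁ e₂
      rw [show labelsOf (.lam x M α) = α :: labelsOf M from rfl, List.nodup_cons] at hnd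
      cases h₁ with
      | refl =>
          cases h₂ with
          | refl => rfl
          | lam h₂' =>
              exfalso
              have hm : l ∈ labelsOf M := head_mem_of_sub h₂' e₂
              have : α = l := by simpa [headL] using e₁
              exact hnd.1 (this ▸ hm)
      | lam h₁' =>
          cases h₂ with
          | refl =>
              exfalso
              have hm : l ∈ labelsOf M := head_mem_of_sub h₁' e₁
              have : α = l := by simpa [headL] using e₂
              exact hnd.1 (this ▸ hm)
          | lam h₂' => exact ih hnd.2 h₁' h₂' e₁ e₂
  | app M N α ihM ihN =>
      intro hnd s₁ s₂ h₁ h₂ e₁ e₂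
      rw [show labelsOf (.app M N α) = α :: (labelsOf M ++ labelsOf N) from rfl,
        List.nodup_cons] at hnd
      have hdisj := List.disjoint_of_nodup_append hnd.2
      cases h₁ with
      | refl =>
          cases h₂ with
          | refl => rfl
          | appL h₂' =>
              exfalso
              have hm : l ∈ labelsOf M := head_mem_of_sub h₂' e₂
              have : α = l := by simpa [headL] using e₁
              exact hnd.1 (this ▸ List.mem_append_left _ hm)
          | appR h₂' =>
              exfalso
              have hm : l ∈ labelsOf N := head_mem_of_sub h₂' e₂
              have : α = l := by simpa [headL] using e₁
              exact hnd.1 (this ▸ List.mem_append_right _ hm)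
      | appL h₁' =>
          cases h₂ with
          | refl =>
              exfalso
              have hm : l ∈ labelsOf M := head_mem_of_sub h₁' e₁
              have : α = l := by simpa [headL] using e₂
              exact hnd.1 (this ▸ List.mem_append_left _ hm)
          | appL h₂' => exact ihM hnd.2.of_append_left h₁' h₂' e₁ e₂
          | appR h₂' =>
              exact absurd (head_mem_of_sub h₂' e₂) (hdisj (head_mem_of_sub h₁' e₁))
      | appR h₁' =>
          cases h₂ with
          | refl =>
              exfalso
              have hm : l ∈ labelsOf N := head_mem_of_sub h₁' e₁
              have : α = l := by simpa [headL] using e₂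
              exact hnd.1 (this ▸ List.mem_append_right _ hm)
          | appL h₂' =>
              exact absurd (head_mem_of_sub h₁' e₁) (hdisj (head_mem_of_sub h₂' e₂))
          | appR h₂' => exact ihN hnd.2.of_append_right h₁' h₂' e₁ e₂
  | eps x M ih =>
      intro hnd s₁ s₂ h₁ h₂ e₁ e₂
      cases h₁ with
      | refl => simp [headL] at e₁
      | eps h₁' =>
          cases h₂ with
          | refl => simp [headL] at e₂
          | eps h₂' => exact ih hnd h₁' h₂' e₁ e₂
  | dup x y z M ih =>
      intro hnd s₁ s₂ h₁ h₂ e₁ e₂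
      cases h₁ with
      | refl => simp [headL] at e₁
      | dup h₁' =>
          cases h₂ with
          | refl => simp [headL] at e₂
          | dup h₂' => exact ih hnd h₁' h₂' e₁ e₂
  | sub M N x ihM ihN =>
      intro hnd s₁ s₂ h₁ h₂ e₁ e₂
      rw [show labelsOf (.sub M N x) = labelsOf M ++ labelsOf N from rfl] at hnd
      have hdisj := List.disjoint_of_nodup_append hnd
      cases h₁ with
      | refl => simp [headL] at e₁
      | subL h₁' =>
          cases h₂ with
          | refl => simp [headL] at e₂
          | subL h₂' => exact ihM hnd.of_append_left h₁' h₂' e₁ e₂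
          | subR h₂' =>
              exact absurd (head_mem_of_sub h₂' e₂) (hdisj (head_mem_of_sub h₁' e₁))
      | subR h₁' =>
          cases h₂ with
          | refl => simp [headL] at e₂
          | subL h₂' =>
              exact absurd (head_mem_of_sub h₁' e₁) (hdisj (head_mem_of_sub h₂' e₂))
          | subR h₂' => exact ihN hnd.of_append_right h₁' h₂' e₁ e₂

/-- The invariant: every labelled subterm's external label ends in the atomic
label assigned at initialisation to a subterm of `T` of the same kind. -/
def GoodLast (T : Term) : Term → Prop
  | .var _ α => ∃ a, α.atoms.getLast? = some (.atom a) ∧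
      ∃ y, Subterm (.var y (.atom a)) T
  | .lam _ _ α => ∃ a, α.atoms.getLast? = some (.atom a) ∧
      ∃ y M, Subterm (.lam y M (.atom a)) T
  | .app _ _ α => ∃ a, α.atoms.getLast? = some (.atom a) ∧
      ∃ P Q, Subterm (.app P Q (.atom a)) T
  | _ => True

def GoodAll (T M : Term) : Prop := ∀ s, Subterm s M → GoodLast T s

lemma goodLast_lam {T : Term} {x M α x' M'} (h : GoodLast T (.lam x M α)) :
    GoodLast T (.lam x' M' α) := h
lemma goodLast_app {T : Term} {M N α M' N'} (h : GoodLast T (.app M N α)) :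
    GoodLast T (.app M' N' α) := h

section GoodAllLemmas
variable {T : Term}

lemma goodAll_of_lam {x M α} (h : GoodAll T (.lam x M α)) : GoodAll T M :=
  fun s hs => h s (.lam hs)
lemma goodAll_of_appL {M N α} (h : GoodAll T (.app M N α)) : GoodAll T M :=
  fun s hs => h s (.appL hs)
lemma goodAll_of_appR {M N α} (h : GoodAll T (.app M N α)) : GoodAll T N :=
  fun s hs => h s (.appR hs)
lemma goodAll_of_eps {x M} (h : GoodAll T (.eps x M)) : GoodAll T M :=
  fun s hs => h s (.eps hs)
lemma goodAll_of_dup {x y z M} (h : GoodAll T (.dup x y z M)) : GoodAll T M :=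
  fun s hs => h s (.dup hs)
lemma goodAll_of_subL {M N x} (h : GoodAll T (.sub M N x)) : GoodAll T M :=
  fun s hs => h s (.subL hs)
lemma goodAll_of_subR {M N x} (h : GoodAll T (.sub M N x)) : GoodAll T N :=
  fun s hs => h s (.subR hs)

lemma goodAll_var_intro {x α} (htop : GoodLast T (.var x α)) : GoodAll T (.var x α) := by
  intro s hs; cases hs; exact htop
lemma goodAll_lam_intro {x M α} (htop : GoodLast T (.lam x M α)) (hM : GoodAll T M) :
    GoodAll T (.lam x M α) := by
  intro s hs
  cases hs with
  | refl => exact htop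
  | lam h => exact hM _ h
lemma goodAll_app_intro {M N α} (htop : GoodLast T (.app M N α)) (hM : GoodAll T M)
    (hN : GoodAll T N) : GoodAll T (.app M N α) := by
  intro s hs
  cases hs with
  | refl => exact htop
  | appL h => exact hM _ h
  | appR h => exact hN _ h
lemma goodAll_eps_intro {x M} (hM : GoodAll T M) : GoodAll T (.eps x M) := by
  intro s hs
  cases hs with
  | refl => trivial
  | eps h => exact hM _ h
lemma goodAll_dup_intro {x y z M} (hM : GoodAll T M) : GoodAll T (.dup x y z M) := by
  intro s hs
  cases hs with
  | refl => trivial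
  | dup h => exact hM _ h
lemma goodAll_sub_intro {M N x} (hM : GoodAll T M) (hN : GoodAll T N) :
    GoodAll T (.sub M N x) := by
  intro s hs
  cases hs with
  | refl => trivial
  | subL h => exact hM _ h
  | subR h => exact hN _ h

lemma goodAll_pre (γ : Lab) : ∀ {M : Term}, GoodAll T M → GoodAll T (pre γ M) := by
  intro M
  induction M with
  | var x α =>
      intro h
      obtain ⟨a, ha, w⟩ := h _ (Subterm.refl _)
      exact goodAll_var_intro ⟨a, by rw [getLast?_comp]; exact ha, w⟩
  | lam x M α ih =>
      intro h
      obtain ⟨a, ha, w⟩ := h _ (Subterm.refl _)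
      exact goodAll_lam_intro ⟨a, by rw [getLast?_comp]; exact ha, w⟩ (goodAll_of_lam h)
  | app M N α ihM ihN =>
      intro h
      obtain ⟨a, ha, w⟩ := h _ (Subterm.refl _)
      exact goodAll_app_intro ⟨a, by rw [getLast?_comp]; exact ha, w⟩
        (goodAll_of_appL h) (goodAll_of_appR h)
  | eps x M ih =>
      intro h
      exact goodAll_eps_intro (ih (goodAll_of_eps h))
  | dup x y z M ih =>
      intro h
      exact goodAll_dup_intro (ih (goodAll_of_dup h))
  | sub M N x ihM ihN =>
      intro h
      exact goodAll_sub_intro (ihM (goodAll_of_subL h)) (goodAll_of_subR h)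

lemma root_preserves {M M' : Term} (h : BetaLcf M M' ∨ SigmaLcf M M')
    (hM : GoodAll T M) : GoodAll T M' := by
  rcases h with hb | hs
  · cases hb with
    | beta hcl =>
        exact goodAll_pre _ (goodAll_sub_intro (goodAll_of_lam (goodAll_of_appL hM))
          (goodAll_pre _ (goodAll_of_appR hM)))
  · cases hs with
    | lam hN =>
        exact goodAll_lam_intro (goodLast_lam ((goodAll_of_subL hM) _ (Subterm.refl _)))
          (goodAll_sub_intro (goodAll_of_lam (goodAll_of_subL hM))
            (goodAll_pre _ (goodAll_of_subR hM)))
    | app1 hx =>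
        exact goodAll_app_intro (goodLast_app ((goodAll_of_subL hM) _ (Subterm.refl _)))
          (goodAll_sub_intro (goodAll_of_appL (goodAll_of_subL hM)) (goodAll_of_subR hM))
          (goodAll_of_appR (goodAll_of_subL hM))
    | app2 hx =>
        exact goodAll_app_intro (goodLast_app ((goodAll_of_subL hM) _ (Subterm.refl _)))
          (goodAll_of_appL (goodAll_of_subL hM))
          (goodAll_sub_intro (goodAll_of_appR (goodAll_of_subL hM)) (goodAll_of_subR hM))
    | cpy1 hN =>
        exact goodAll_sub_intro
          (goodAll_sub_intro (goodAll_of_dup (goodAll_of_subL hM))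
            (goodAll_pre _ (goodAll_of_subR hM)))
          (goodAll_pre _ (goodAll_of_subR hM))
    | cpy2 hx =>
        exact goodAll_dup_intro
          (goodAll_sub_intro (goodAll_of_dup (goodAll_of_subL hM)) (goodAll_of_subR hM))
    | ers1 hN => exact goodAll_of_eps (goodAll_of_subL hM)
    | ers2 hx =>
        exact goodAll_eps_intro
          (goodAll_sub_intro (goodAll_of_eps (goodAll_of_subL hM)) (goodAll_of_subR hM))
    | var => exact goodAll_pre _ (goodAll_of_subR hM)
    | cmp hx =>
        exact goodAll_sub_intro (goodAll_of_subL (goodAll_of_subL hM))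
          (goodAll_sub_intro (goodAll_of_subR (goodAll_of_subL hM)) (goodAll_of_subR hM))

lemma ctx_preserves {M M' : Term} (h : LcfStep M M') (hM : GoodAll T M) : GoodAll T M' := by
  induction h with
  | base hr => exact root_preserves hr hM
  | lam _ ih =>
      exact goodAll_lam_intro (goodLast_lam (hM _ (Subterm.refl _))) (ih (goodAll_of_lam hM))
  | appL _ ih =>
      exact goodAll_app_intro (goodLast_app (hM _ (Subterm.refl _))) (ih (goodAll_of_appL hM))
        (goodAll_of_appR hM)
  | appR _ ih =>
      exact goodAll_app_intro (goodLast_app (hM _ (Subterm.refl _))) (goodAll_of_appL hM)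
        (ih (goodAll_of_appR hM))
  | eps _ ih => exact goodAll_eps_intro (ih (goodAll_of_eps hM))
  | dup _ ih => exact goodAll_dup_intro (ih (goodAll_of_dup hM))
  | subL _ ih => exact goodAll_sub_intro (ih (goodAll_of_subL hM)) (goodAll_of_subR hM)
  | subR _ ih => exact goodAll_sub_intro (goodAll_of_subL hM) (ih (goodAll_of_subR hM))

end GoodAllLemmas

lemma rtg_preserves {T M M' : Term} (h : Relation.ReflTransGen LcfStep M M')
    (hM : GoodAll T M) : GoodAll T M' := by
  induction h with
  | refl => exact hM
  | tail _ hstep ih => exact ctx_preserves hstep ih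

lemma initial_good {T : Term} (h : Initialised T) : GoodAll T T := by
  intro s hs
  obtain ⟨hatom, _⟩ := h
  cases s with
  | var x α =>
      obtain ⟨a, rfl⟩ := hatom α (head_mem_of_sub hs rfl)
      exact ⟨a, rfl, x, hs⟩
  | lam x M α =>
      obtain ⟨a, rfl⟩ := hatom α (head_mem_of_sub hs rfl)
      exact ⟨a, rfl, x, M, hs⟩
  | app M N α =>
      obtain ⟨a, rfl⟩ := hatom α (head_mem_of_sub hs rfl)
      exact ⟨a, rfl, M, N, hs⟩
  | eps x M => trivial
  | dup x y z M => trivial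
  | sub M N x => trivial

/-- Last atomic label: let T be initialised, T →_lcf* T', and
let N be an application, abstraction or variable subterm of T' whose external
label reads as the atomic sequence l₁⋯lₙ (n ≥ 1).  Then lₙ is the label
assigned at initialisation to an application (resp. abstraction, resp.
variable) subterm of T iff N is an application (resp. abstraction, resp.
variable) term. -/
theorem lcf_last_atomic_label (T T' N : Term)
    (hInit : Initialised T)
    (hred : Relation.ReflTransGen LcfStep T T')
    (hsub : Subterm N T')
    (hshape : IsApp N ∨ IsLam N ∨ IsVar N)
    (l : Lab) (hl : ((elabel N).atoms).getLast? = some l) :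
    ((∃ M₁ M₂, Subterm (Term.app M₁ M₂ l) T) ↔ IsApp N) ∧
    ((∃ x M, Subterm (Term.lam x M l) T) ↔ IsLam N) ∧
    ((∃ x, Subterm (Term.var x l) T) ↔ IsVar N) := by
  have hG : GoodAll T T' := rtg_preserves hred (initial_good hInit)
  have hgl := hG N hsub
  have hnd := hInit.2
  rcases hshape with ⟨M₁, M₂, α, rfl⟩ | ⟨x, M, α, rfl⟩ | ⟨x, α, rfl⟩
  · obtain ⟨a, ha, P, Q, hPQ⟩ := hgl
    have hla : l = Lab.atom a := by
      have : (Lab.atoms α).getLast? = some l := hl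
      rw [this] at ha
      exact Option.some.inj ha
    subst hla
    refine ⟨⟨fun _ => ⟨M₁, M₂, α, rfl⟩, fun _ => ⟨P, Q, hPQ⟩⟩, ?_, ?_⟩
    · constructor
      · rintro ⟨y, M0, hlam⟩
        have := kind_unique T hnd hPQ hlam rfl rfl
        simp [kindOf] at this
      · rintro ⟨y, M0, β, h⟩
        cases h
    · constructor
      · rintro ⟨y, hvar⟩
        have := kind_unique T hnd hPQ hvar rfl rfl
        simp [kindOf] at this
      · rintro ⟨y, β, h⟩
        cases h
  · obtain ⟨a, ha, y, M0, hLM⟩ := hgl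
    have hla : l = Lab.atom a := by
      have : (Lab.atoms α).getLast? = some l := hl
      rw [this] at ha
      exact Option.some.inj ha
    subst hla
    refine ⟨?_, ⟨fun _ => ⟨x, M, α, rfl⟩, fun _ => ⟨y, M0, hLM⟩⟩, ?_⟩
    · constructor
      · rintro ⟨P, Q, happ⟩
        have := kind_unique T hnd hLM happ rfl rfl
        simp [kindOf] at this
      · rintro ⟨P, Q, β, h⟩
        cases h
    · constructor
      · rintro ⟨y', hvar⟩
        have := kind_unique T hnd hLM hvar rfl rfl
        simp [kindOf] at this
      · rintro ⟨y', β, h⟩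
        cases h
  · obtain ⟨a, ha, y, hV⟩ := hgl
    have hla : l = Lab.atom a := by
      have : (Lab.atoms α).getLast? = some l := hl
      rw [this] at ha
      exact Option.some.inj ha
    subst hla
    refine ⟨?_, ?_, ⟨fun _ => ⟨x, α, rfl⟩, fun _ => ⟨y, hV⟩⟩⟩
    · constructor
      · rintro ⟨P, Q, happ⟩
        have := kind_unique T hnd hV happ rfl rfl
        simp [kindOf] at this
      · rintro ⟨P, Q, β, h⟩
        cases h
    · constructor
      · rintro ⟨y', M0, hlam⟩
        have := kind_unique T hnd hV hlam rfl rfl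
        simp [kindOf] at this
      · rintro ⟨y', M0, β, h⟩
        cases h
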